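/- arXiv:1411.4190 — 3 statements merged into one kernel-verified Lean document; each statement's English description precedes it below -/
import Mathlib

section
/- Let p be an odd prime and λ = (λ₁, λ₂) ∈ {(1,0)} ∪ {(i,1) : 0 ≤ i ≤ p−1}. Then for all integers k₁, k₂, l₁, l₂, the following identity holds in G_λ^(p): (a₁^{k₁} a₂^{k₂} b₁^{l₁} b₂^{l₂})^p = [a₁,b₁]^{k₁+λ₁·k₂} · [a₁,b₂]^{λ₂·k₂} · [a₂,b₁]^{l₁} · [a₂,b₂]^{l₁+l₂}. -/
def gcomm {G : Type*} [Group G] (x y : G) : G := x⁻¹ * y⁻¹ * x * y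

def jkRels (p : ℕ) (lam : ℕ × ℕ) : Set (FreeGroup (Fin 4)) :=
  {r | ∃ i j k : Fin 4,
      r = gcomm (gcomm (FreeGroup.of i) (FreeGroup.of j)) (FreeGroup.of k)} ∪
  {FreeGroup.of 0 ^ p * (gcomm (FreeGroup.of 0) (FreeGroup.of 2))⁻¹,
   FreeGroup.of 1 ^ p *
     (gcomm (FreeGroup.of 0) (FreeGroup.of 2 ^ lam.1 * FreeGroup.of 3 ^ lam.2))⁻¹,
   FreeGroup.of 2 ^ p * (gcomm (FreeGroup.of 1) (FreeGroup.of 2 * FreeGroup.of 3))⁻¹,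
   FreeGroup.of 3 ^ p * (gcomm (FreeGroup.of 1) (FreeGroup.of 3))⁻¹,
   gcomm (FreeGroup.of 0) (FreeGroup.of 1),
   gcomm (FreeGroup.of 2) (FreeGroup.of 3)}

abbrev JKGroup (p : ℕ) (lam : ℕ × ℕ) : Type := PresentedGroup (jkRels p lam)

def jka₁ (p : ℕ) (lam : ℕ × ℕ) : JKGroup p lam := PresentedGroup.of 0
def jka₂ (p : ℕ) (lam : ℕ × ℕ) : JKGroup p lam := PresentedGroup.of 1
def jkb₁ (p : ℕ) (lam : ℕ × ℕ) : JKGroup p lam := PresentedGroup.of 2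
def jkb₂ (p : ℕ) (lam : ℕ × ℕ) : JKGroup p lam := PresentedGroup.of 3

/-!
The relators make every commutator of generators central, so `G ⧸ Z(G)` is generated by
commuting elements and `G` has class at most two; commutators are then bilinear and
`(x * y) ^ n = x ^ n * y ^ n * [y, x] ^ (n choose 2)`. Apply this with `A = a₁ ^ k₁ * a₂ ^ k₂`
and `B = b₁ ^ l₁ * b₂ ^ l₂`. The powers `A ^ p` and `B ^ p` are read off the defining relations
by bilinearity; in particular `A ^ p` is central, so `[B, A] ^ p = [B, A ^ p] = 1`, and since `p` is
odd it divides `p choose 2`, which kills the correction term.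
-/

namespace Subgroup

variable {G : Type*} [Group G]

theorem mem_center_of_commute_of_closure_eq_top {S : Set G} (hS : closure S = ⊤) {z : G}
    (h : ∀ s ∈ S, Commute z s) : z ∈ center G := by
  rw [← centralizer_univ, ← coe_top, ← hS, centralizer_closure, mem_centralizer_iff]
  exact fun s hs => (h s hs).eq.symm

end Subgroup

open Subgroup

theorem zpow_pow_comm {G : Type*} [Group G] (a : G) (k : ℤ) (n : ℕ) :
    (a ^ k) ^ n = (a ^ n) ^ k := by
  rw [← zpow_natCast (a ^ k), ← zpow_mul, mul_comm, zpow_mul, zpow_natCast]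

section Gcomm

variable {G H : Type*} [Group G] [Group H] {x y u v : G}

theorem map_gcomm (f : G →* H) (x y : G) : f (gcomm x y) = gcomm (f x) (f y) := by
  simp only [gcomm, map_mul, map_inv]

theorem gcomm_eq_one_iff_commute : gcomm x y = 1 ↔ Commute x y := by
  rw [show gcomm x y = (y * x)⁻¹ * (x * y) by simp only [gcomm]; group, inv_mul_eq_one]
  exact eq_comm

theorem inv_gcomm (x y : G) : (gcomm x y)⁻¹ = gcomm y x := by
  simp only [gcomm]; group

theorem mul_comm_gcomm (x y : G) : x * y = y * x * gcomm x y := by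
  simp only [gcomm]; group

theorem conj_eq_mul_gcomm (x y : G) : x⁻¹ * y * x = y * gcomm y x := by
  simp only [gcomm]; group

theorem gcomm_mem_iff_commute_mk (N : Subgroup G) [N.Normal] :
    gcomm x y ∈ N ↔ Commute (x : G ⧸ N) y := by
  rw [← QuotientGroup.eq_one_iff, ← QuotientGroup.mk'_apply, map_gcomm,
    gcomm_eq_one_iff_commute]
  rfl

theorem gcomm_mem_center_of_closure_eq_top {S : Set G} (hS : closure S = ⊤)
    (h : ∀ s ∈ S, ∀ t ∈ S, gcomm s t ∈ center G) (x y : G) : gcomm x y ∈ center G := by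
  set f := QuotientGroup.mk' (center G)
  have hfS : closure (f '' S) = ⊤ := by
    rw [← MonoidHom.map_closure, hS, ← MonoidHom.range_eq_map,
      MonoidHom.range_eq_top.2 (QuotientGroup.mk'_surjective _)]
  have hcomm : ∀ a ∈ f '' S, ∀ b ∈ f '' S, a * b = b * a := by
    rintro _ ⟨s, hs, rfl⟩ _ ⟨t, ht, rfl⟩
    exact (gcomm_mem_iff_commute_mk _).1 (h s hs t ht)
  have hle := closure_le_centralizer_centralizer (f '' S)
  rw [hfS] at hle
  exact (gcomm_mem_iff_commute_mk _).2
    (Set.centralizer_centralizer_comm_of_comm hcomm _ (hle (mem_top _)) _ (hle (mem_top _)))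

theorem gcomm_mul_right (h : gcomm x u ∈ center G) :
    gcomm x (u * v) = gcomm x u * gcomm x v := by
  have hc := mem_center_iff.1 h
  calc gcomm x (u * v) = x⁻¹ * v⁻¹ * x * (gcomm x u * v) := by simp only [gcomm]; group
    _ = x⁻¹ * v⁻¹ * x * (v * gcomm x u) := by rw [hc v]
    _ = gcomm x v * gcomm x u := by simp only [gcomm]; group
    _ = gcomm x u * gcomm x v := hc _

theorem gcomm_zpow_right (h : gcomm x y ∈ center G) (n : ℤ) :
    gcomm x (y ^ n) = gcomm x y ^ n := by
  have hyc : Commute y (gcomm y x) := by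
    rw [← inv_gcomm]; exact Commute.inv_right (mem_center_iff.1 h y)
  have hconj : x⁻¹ * y ^ n * x = y ^ n * gcomm y x ^ n := by
    have := conj_zpow (a := x⁻¹) (b := y) (i := n)
    rw [inv_inv] at this
    rw [← this, conj_eq_mul_gcomm, hyc.mul_zpow]
  calc gcomm x (y ^ n) = (x⁻¹ * y ^ n * x)⁻¹ * y ^ n := by simp only [gcomm]; group
    _ = (gcomm y x ^ n)⁻¹ := by rw [hconj]; group
    _ = gcomm x y ^ n := by rw [← inv_gcomm, inv_zpow, inv_inv]

theorem gcomm_pow_right (h : gcomm x y ∈ center G) (n : ℕ) :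
    gcomm x (y ^ n) = gcomm x y ^ n := by
  exact_mod_cast gcomm_zpow_right h n

theorem mul_pow_eq_of_gcomm_mem_center (h : gcomm y x ∈ center G) (n : ℕ) :
    (x * y) ^ n = x ^ n * y ^ n * gcomm y x ^ n.choose 2 := by
  induction n with
  | zero => simp
  | succ n ih =>
    have hyx : y * x ^ n = x ^ n * y * gcomm y x ^ n := by
      rw [mul_comm_gcomm y, gcomm_pow_right h]
    calc (x * y) ^ (n + 1) = x * (y * x ^ n) * y ^ n * gcomm y x ^ n.choose 2 := by
          rw [pow_succ', ih]; group
      _ = x ^ (n + 1) * y * (gcomm y x ^ n * y ^ n) * gcomm y x ^ n.choose 2 := by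
          rw [hyx]; group
      _ = x ^ (n + 1) * y ^ (n + 1) * gcomm y x ^ (n + 1).choose 2 := by
          rw [← (Commute.pow_pow (mem_center_iff.1 h y) n n).eq, Nat.choose_succ_succ',
            Nat.choose_one_right, pow_add, pow_succ']
          group

theorem gcomm_pow_eq_one_of_pow_mem_center {n : ℕ} (h : gcomm x y ∈ center G)
    (hy : y ^ n ∈ center G) : gcomm x y ^ n = 1 := by
  rw [← gcomm_pow_right h, gcomm_eq_one_iff_commute]
  exact mem_center_iff.1 hy x

end Gcomm

theorem Odd.dvd_choose_two {n : ℕ} (hn : Odd n) : n ∣ n.choose 2 := by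
  obtain ⟨m, rfl⟩ := hn
  refine ⟨m, ?_⟩
  rw [Nat.choose_two_right, Nat.add_sub_cancel, mul_comm 2 m, ← mul_assoc,
    Nat.mul_div_cancel _ two_pos]

section JKGroup

variable {p : ℕ} {lam : ℕ × ℕ}

theorem jk_gcomm_mem_center (x y : JKGroup p lam) : gcomm x y ∈ center (JKGroup p lam) := by
  refine gcomm_mem_center_of_closure_eq_top (PresentedGroup.closure_range_of _) ?_ x y
  rintro _ ⟨i, rfl⟩ _ ⟨j, rfl⟩
  refine mem_center_of_commute_of_closure_eq_top (PresentedGroup.closure_range_of _) ?_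
  rintro _ ⟨k, rfl⟩
  have h := PresentedGroup.one_of_mem (rels := jkRels p lam) (Or.inl ⟨i, j, k, rfl⟩)
  rw [map_gcomm, map_gcomm] at h
  exact gcomm_eq_one_iff_commute.1 h

theorem jk_commute_gcomm (x y g : JKGroup p lam) : Commute (gcomm x y) g :=
  (mem_center_iff.1 (jk_gcomm_mem_center x y) g).symm

theorem jka₁_pow : jka₁ p lam ^ p = gcomm (jka₁ p lam) (jkb₁ p lam) := by
  have h := PresentedGroup.mk_eq_mk_of_mul_inv_mem (rels := jkRels p lam)
    (x := FreeGroup.of 0 ^ p) (y := gcomm (FreeGroup.of 0) (FreeGroup.of 2)) (Or.inr (by simp))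
  rwa [map_pow, map_gcomm] at h

theorem jka₂_pow : jka₂ p lam ^ p =
    gcomm (jka₁ p lam) (jkb₁ p lam) ^ lam.1 * gcomm (jka₁ p lam) (jkb₂ p lam) ^ lam.2 := by
  have h := PresentedGroup.mk_eq_mk_of_mul_inv_mem (rels := jkRels p lam)
    (x := FreeGroup.of 1 ^ p)
    (y := gcomm (FreeGroup.of 0) (FreeGroup.of 2 ^ lam.1 * FreeGroup.of 3 ^ lam.2))
    (Or.inr (by simp))
  rw [map_pow, map_gcomm, map_mul, map_pow, map_pow] at h
  refine h.trans ?_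
  rw [gcomm_mul_right (jk_gcomm_mem_center _ _), gcomm_pow_right (jk_gcomm_mem_center _ _),
    gcomm_pow_right (jk_gcomm_mem_center _ _)]
  rfl

theorem jkb₁_pow :
    jkb₁ p lam ^ p = gcomm (jka₂ p lam) (jkb₁ p lam) * gcomm (jka₂ p lam) (jkb₂ p lam) := by
  have h := PresentedGroup.mk_eq_mk_of_mul_inv_mem (rels := jkRels p lam)
    (x := FreeGroup.of 2 ^ p) (y := gcomm (FreeGroup.of 1) (FreeGroup.of 2 * FreeGroup.of 3))
    (Or.inr (by simp))
  rw [map_pow, map_gcomm, map_mul] at h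
  exact h.trans (gcomm_mul_right (jk_gcomm_mem_center _ _))

theorem jkb₂_pow : jkb₂ p lam ^ p = gcomm (jka₂ p lam) (jkb₂ p lam) := by
  have h := PresentedGroup.mk_eq_mk_of_mul_inv_mem (rels := jkRels p lam)
    (x := FreeGroup.of 3 ^ p) (y := gcomm (FreeGroup.of 1) (FreeGroup.of 3)) (Or.inr (by simp))
  rwa [map_pow, map_gcomm] at h

theorem commute_jka₁_jka₂ : Commute (jka₁ p lam) (jka₂ p lam) := by
  have h := PresentedGroup.one_of_mem (rels := jkRels p lam)
    (x := gcomm (FreeGroup.of 0) (FreeGroup.of 1)) (Or.inr (by simp))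
  rw [map_gcomm] at h
  exact gcomm_eq_one_iff_commute.1 h

theorem commute_jkb₁_jkb₂ : Commute (jkb₁ p lam) (jkb₂ p lam) := by
  have h := PresentedGroup.one_of_mem (rels := jkRels p lam)
    (x := gcomm (FreeGroup.of 2) (FreeGroup.of 3)) (Or.inr (by simp))
  rw [map_gcomm] at h
  exact gcomm_eq_one_iff_commute.1 h

theorem jka₁_zpow_mul_jka₂_zpow_pow (k₁ k₂ : ℤ) :
    (jka₁ p lam ^ k₁ * jka₂ p lam ^ k₂) ^ p =
      gcomm (jka₁ p lam) (jkb₁ p lam) ^ (k₁ + (lam.1 : ℤ) * k₂) *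
        gcomm (jka₁ p lam) (jkb₂ p lam) ^ ((lam.2 : ℤ) * k₂) := by
  have hc : Commute (gcomm (jka₁ p lam) (jkb₁ p lam) ^ lam.1)
      (gcomm (jka₁ p lam) (jkb₂ p lam) ^ lam.2) :=
    (jk_commute_gcomm _ _ _).pow_left _
  rw [(commute_jka₁_jka₂.zpow_zpow k₁ k₂).mul_pow, zpow_pow_comm, zpow_pow_comm, jka₁_pow,
    jka₂_pow, hc.mul_zpow, ← zpow_natCast, ← zpow_natCast, ← zpow_mul, ← zpow_mul, ← mul_assoc,
    ← zpow_add]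

theorem jkb₁_zpow_mul_jkb₂_zpow_pow (l₁ l₂ : ℤ) :
    (jkb₁ p lam ^ l₁ * jkb₂ p lam ^ l₂) ^ p =
      gcomm (jka₂ p lam) (jkb₁ p lam) ^ l₁ * gcomm (jka₂ p lam) (jkb₂ p lam) ^ (l₁ + l₂) := by
  rw [(commute_jkb₁_jkb₂.zpow_zpow l₁ l₂).mul_pow, zpow_pow_comm, zpow_pow_comm, jkb₁_pow,
    jkb₂_pow, (jk_commute_gcomm _ _ _).mul_zpow, mul_assoc, ← zpow_add]

end JKGroup

theorem stmt_3_general (p : ℕ) (hodd : Odd p) (lam : ℕ × ℕ)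
    (k₁ k₂ l₁ l₂ : ℤ) :
    (jka₁ p lam ^ k₁ * jka₂ p lam ^ k₂ * jkb₁ p lam ^ l₁ * jkb₂ p lam ^ l₂) ^ p =
      gcomm (jka₁ p lam) (jkb₁ p lam) ^ (k₁ + (lam.1 : ℤ) * k₂) *
      gcomm (jka₁ p lam) (jkb₂ p lam) ^ ((lam.2 : ℤ) * k₂) *
      gcomm (jka₂ p lam) (jkb₁ p lam) ^ l₁ *
      gcomm (jka₂ p lam) (jkb₂ p lam) ^ (l₁ + l₂) := by
  set A := jka₁ p lam ^ k₁ * jka₂ p lam ^ k₂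
  set B := jkb₁ p lam ^ l₁ * jkb₂ p lam ^ l₂
  have hA : A ^ p ∈ center (JKGroup p lam) := by
    rw [jka₁_zpow_mul_jka₂_zpow_pow]
    exact mul_mem (zpow_mem (jk_gcomm_mem_center _ _) _) (zpow_mem (jk_gcomm_mem_center _ _) _)
  have hBA : gcomm B A ^ p = 1 := gcomm_pow_eq_one_of_pow_mem_center (jk_gcomm_mem_center B A) hA
  obtain ⟨m, hm⟩ := hodd.dvd_choose_two
  calc (A * jkb₁ p lam ^ l₁ * jkb₂ p lam ^ l₂) ^ p = (A * B) ^ p := by rw [mul_assoc]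
    _ = A ^ p * B ^ p * gcomm B A ^ p.choose 2 :=
      mul_pow_eq_of_gcomm_mem_center (jk_gcomm_mem_center B A) p
    _ = _ := by
      rw [hm, pow_mul, hBA, one_pow, mul_one, jka₁_zpow_mul_jka₂_zpow_pow,
        jkb₁_zpow_mul_jkb₂_zpow_pow, ← mul_assoc]

theorem stmt_3 (p : ℕ) (hp : p.Prime) (hodd : Odd p) (lam : ℕ × ℕ)
    (hlam : lam = (1, 0) ∨ (lam.1 ≤ p - 1 ∧ lam.2 = 1))
    (k₁ k₂ l₁ l₂ : ℤ) :
    (jka₁ p lam ^ k₁ * jka₂ p lam ^ k₂ * jkb₁ p lam ^ l₁ * jkb₂ p lam ^ l₂) ^ p =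
      gcomm (jka₁ p lam) (jkb₁ p lam) ^ (k₁ + (lam.1 : ℤ) * k₂) *
      gcomm (jka₁ p lam) (jkb₂ p lam) ^ ((lam.2 : ℤ) * k₂) *
      gcomm (jka₂ p lam) (jkb₁ p lam) ^ l₁ *
      gcomm (jka₂ p lam) (jkb₂ p lam) ^ (l₁ + l₂) :=
  stmt_3_general p hodd lam k₁ k₂ l₁ l₂
end

section
/- Let p be a prime and G a finite p-group whose endomorphism monoid End(G) is commutative. Then the range of every endomorphism φ of G is a fully invariant subgroup of G (i.e. ψ maps the range of φ into itself for every endomorphism ψ of G), and every cyclic subgroup of G whose order divides the exponent of the abelianization G/[G,G] is fully invariant. -/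
/-!
Any two commuting endomorphisms `φ, ψ` satisfy `ψ(φ G) = φ(ψ G) ≤ φ G`, which gives the first
claim. For the second, a cyclic subgroup `H` of order `d ∣ exp(G/[G,G])` is itself the range of
an endomorphism: by the structure theorem the abelian `p`-group `G/[G,G]` is a product of cyclic
groups `ℤ/nᵢ`, and since all `nᵢ` are powers of `p`, the `p`-power `d` divides one of them.
Hence `G ↠ G/[G,G] ↠ ℤ/nᵢ ↠ ℤ/d ≅ H ↪ G` is an endomorphism with range `H`.
-/

theorem MonoidHom.map_range_le_range_of_comp_comm {G : Type*} [Group G] {φ ψ : G →* G}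
    (h : φ.comp ψ = ψ.comp φ) : φ.range.map ψ ≤ φ.range := by
  rw [MonoidHom.map_range, ← h, MonoidHom.range_comp]
  exact ψ.range.map_le_range φ

theorem Nat.exists_dvd_of_prime_pow_dvd_lcm {ι : Type*} {s : Finset ι} {f : ι → ℕ} {p k l : ℕ}
    (hp : p.Prime) (hk : k ≠ 0) (hf : ∀ i ∈ s, f i ∣ p ^ l) (h : p ^ k ∣ s.lcm f) :
    ∃ i ∈ s, p ^ k ∣ f i := by
  by_contra! hcon
  have hsmall : ∀ i ∈ s, f i ∣ p ^ (k - 1) := by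
    intro i hi
    obtain ⟨j, -, hj⟩ := (Nat.dvd_prime_pow hp).mp (hf i hi)
    have hjk : ¬ k ≤ j := fun hkj => hcon i hi (hj ▸ pow_dvd_pow p hkj)
    exact hj ▸ pow_dvd_pow p (by omega)
  have := (Nat.pow_dvd_pow_iff_le_right hp.one_lt).mp (h.trans (Finset.lcm_dvd hsmall))
  omega

theorem IsPGroup.exists_surjective_zmod_of_dvd_exponent {p : ℕ} (hp : p.Prime) {A : Type*}
    [CommGroup A] [Finite A] (hA : IsPGroup p A) {d : ℕ} (hd : d ∣ Monoid.exponent A) :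
    ∃ f : A →* Multiplicative (ZMod d), Function.Surjective f := by
  have : Fact p.Prime := ⟨hp⟩
  obtain ⟨m, hcard⟩ := IsPGroup.iff_card.mp hA
  obtain ⟨k, -, rfl⟩ := (Nat.dvd_prime_pow hp).mp (hcard ▸ hd.trans Group.exponent_dvd_nat_card)
  rcases eq_or_ne k 0 with rfl | hk
  · rw [pow_zero]
    exact ⟨1, fun y => ⟨1, Subsingleton.elim (α := ZMod 1) _ _⟩⟩
  obtain ⟨ι, _, n, -, ⟨e⟩⟩ := CommGroup.equiv_prod_multiplicative_zmod_of_finite A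
  have hexp : Monoid.exponent A = Finset.univ.lcm n := by
    simp [Monoid.exponent_eq_of_mulEquiv e, Monoid.exponent_pi, ZMod.exponent]
  have hn : ∀ i ∈ Finset.univ, n i ∣ p ^ m := fun i hi =>
    (Finset.dvd_lcm hi).trans (hexp ▸ hcard ▸ Group.exponent_dvd_nat_card)
  obtain ⟨i, -, hi⟩ := Nat.exists_dvd_of_prime_pow_dvd_lcm hp hk hn (hexp ▸ hd)
  refine ⟨(ZMod.castHom hi (ZMod (p ^ k))).toAddMonoidHom.toMultiplicative.comp
    ((Pi.evalMonoidHom _ i).comp e.toMonoidHom), ?_⟩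
  exact (ZMod.castHom_surjective hi).comp ((Function.surjective_eval i).comp e.surjective)

theorem IsPGroup.exists_range_eq_of_isCyclic {p : ℕ} (hp : p.Prime) {G : Type*} [Group G]
    [Finite G] (hG : IsPGroup p G) {H : Subgroup G} (hH : IsCyclic H)
    (hd : Nat.card H ∣ Monoid.exponent (Abelianization G)) : ∃ φ : G →* G, φ.range = H := by
  obtain ⟨f, hf⟩ := (hG.to_quotient (commutator G)).exists_surjective_zmod_of_dvd_exponent hp hd
  refine ⟨H.subtype.comp ((zmodCyclicMulEquiv hH).toMonoidHom.comp (f.comp Abelianization.of)), ?_⟩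
  rw [MonoidHom.range_comp, MonoidHom.range_eq_top.mpr, ← MonoidHom.range_eq_map, H.range_subtype]
  exact (zmodCyclicMulEquiv hH).surjective.comp (hf.comp (QuotientGroup.mk'_surjective _))

theorem stmt_12 (p : ℕ) (hp : p.Prime) (G : Type*) [Group G] [Finite G]
    (hpG : IsPGroup p G)
    (hcomm : ∀ φ ψ : G →* G, φ.comp ψ = ψ.comp φ) :
    (∀ φ ψ : G →* G, φ.range.map ψ ≤ φ.range) ∧
    (∀ H : Subgroup G, IsCyclic H → Nat.card H ∣ Monoid.exponent (Abelianization G) →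
      ∀ ψ : G →* G, H.map ψ ≤ H) := by
  have hinv : ∀ φ ψ : G →* G, φ.range.map ψ ≤ φ.range := fun φ ψ =>
    MonoidHom.map_range_le_range_of_comp_comm (hcomm φ ψ)
  refine ⟨hinv, fun H hH hd ψ => ?_⟩
  obtain ⟨φ, rfl⟩ := hpG.exists_range_eq_of_isCyclic hp hH hd
  exact hinv φ ψ
end

section
/- Let p be a prime and G a finite p-group such that every automorphism of G commutes with every endomorphism of G under composition. Then every endomorphism φ of G is either an automorphism (bijective) or nilpotent, i.e. there exists a positive integer n such that the n-fold composition φ^n is the trivial endomorphism sending every element of G to the identity. -/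
/-!
Some power ψ = φⁿ (n > 0) of an endomorphism is idempotent, and it suffices to show that ψ is
trivial or surjective. Otherwise G = ψ(G) ⋉ ker ψ with both factors nontrivial, and ψ(G) is normal
because ψ commutes with inner automorphisms, so the product is direct. An element z of order p in
the centre of ker ψ is then central in G, and a nontrivial homomorphism f : G → ⟨z⟩ that kills
ker ψ yields the central automorphism x ↦ x f(x). Commuting with ψ forces f to vanish on ψ(G) as
well, so f is trivial.
-/

theorem exists_isIdempotentElem_pow {M : Type*} [Monoid M] [Finite M] (x : M) :
    ∃ n, 0 < n ∧ IsIdempotentElem (x ^ n) := by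
  obtain ⟨a, b, hne, hab⟩ := Finite.exists_ne_map_eq_of_infinite (fun n : ℕ => x ^ n)
  wlog hlt : a < b generalizing a b
  · exact this b a hne.symm hab.symm (by omega)
  obtain ⟨d, rfl⟩ := Nat.exists_eq_add_of_lt hlt
  have absorb (k : ℕ) : x ^ a * x ^ ((d + 1) * k) = x ^ a := by
    induction k with
    | zero => simp
    | succ k ih =>
      rw [mul_add, mul_one, pow_add, ← mul_assoc, ih, ← pow_add, ← add_assoc]
      exact hab.symm
  refine ⟨(d + 1) * (a + 1), by positivity, ?_⟩
  obtain ⟨c, hc⟩ := Nat.exists_eq_add_of_le' (show a ≤ (d + 1) * (a + 1) by nlinarith)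
  rw [IsIdempotentElem]
  nth_rw 1 [hc]
  rw [pow_add, mul_assoc, absorb, ← pow_add, ← hc]

section

variable {G : Type*} [Group G]

def MulAut.ofCentral (f : G →* G) (hcentral : ∀ x y, Commute (f x) y)
    (hsq : ∀ x, f (f x) = 1) : MulAut G where
  toFun x := x * f x
  invFun x := x * (f x)⁻¹
  left_inv x := by simp [hsq]
  right_inv x := by simp [hsq]
  map_mul' x y := by
    rw [map_mul, mul_assoc, mul_assoc, ← mul_assoc y, ← (hcentral x y).eq, mul_assoc]

theorem MulAut.ofCentral_apply (f : G →* G) (hcentral : ∀ x y, Commute (f x) y)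
    (hsq : ∀ x, f (f x) = 1) (x : G) : MulAut.ofCentral f hcentral hsq x = x * f x := rfl

namespace MonoidHom

variable {ψ : G →* G}

theorem inv_mul_mem_ker_of_idempotent (hψ : ∀ x, ψ (ψ x) = ψ x) (x : G) :
    (ψ x)⁻¹ * x ∈ ψ.ker := by
  rw [mem_ker, map_mul, map_inv, hψ, inv_mul_cancel]

theorem disjoint_range_ker_of_idempotent (hψ : ∀ x, ψ (ψ x) = ψ x) :
    Disjoint ψ.range ψ.ker := by
  rw [Subgroup.disjoint_def]
  rintro _ ⟨y, rfl⟩ hy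
  rwa [mem_ker, hψ] at hy

theorem range_normal_of_map_conj (hconj : ∀ g x, ψ (g * x * g⁻¹) = g * ψ x * g⁻¹) :
    ψ.range.Normal where
  conj_mem := by
    rintro _ ⟨y, rfl⟩ g
    exact ⟨g * y * g⁻¹, hconj g y⟩

theorem mem_center_of_mem_ker_of_commute (hψ : ∀ x, ψ (ψ x) = ψ x) (hrange : ψ.range.Normal)
    {z : G} (hz : z ∈ ψ.ker) (hzK : ∀ k ∈ ψ.ker, Commute z k) : z ∈ Subgroup.center G := by
  rw [Subgroup.mem_center_iff]
  intro x
  have hz_range : Commute z (ψ x) := (Subgroup.commute_of_normal_of_disjoint _ _ hrange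
    ψ.normal_ker (disjoint_range_ker_of_idempotent hψ) (ψ x) z ⟨x, rfl⟩ hz).symm
  have := hz_range.mul_right (hzK _ (inv_mul_mem_ker_of_idempotent hψ x))
  rw [mul_inv_cancel_left] at this
  exact this.eq.symm

theorem eq_one_of_comp_eq_one_of_ker_le (hψ : ∀ x, ψ (ψ x) = ψ x) {H : Type*} [Group H]
    {f : G →* H} (hfψ : f.comp ψ = 1) (hfK : ψ.ker ≤ f.ker) : f = 1 := by
  ext x
  rw [← mul_inv_cancel_left (ψ x) x, map_mul, ← comp_apply, hfψ, one_apply, one_mul]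
  exact hfK (inv_mul_mem_ker_of_idempotent hψ x)

end MonoidHom

namespace IsPGroup

variable {p : ℕ} [Fact p.Prime] [Finite G]

section Nontrivial

variable [Nontrivial G]

theorem exists_normal_index_eq_prime (hG : IsPGroup p G) :
    ∃ M : Subgroup G, M.Normal ∧ M.index = p := by
  obtain ⟨m, hm, hcard⟩ := hG.nontrivial_iff_card.mp ‹_›
  obtain ⟨M, hM⟩ := Sylow.exists_subgroup_card_pow_prime (G := G) p
    (n := m - 1) (hcard ▸ pow_dvd_pow p (Nat.sub_le m 1))
  have hindex : M.index = p := by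
    refine Nat.eq_of_mul_eq_mul_left (pow_pos (Fact.out : p.Prime).pos (m - 1)) ?_
    rw [← hM, M.card_mul_index, hcard, hM, ← pow_succ, Nat.sub_add_cancel hm]
  refine ⟨M, Subgroup.normal_of_index_eq_minFac_card ?_, hindex⟩
  rw [hindex, hcard, Nat.Prime.pow_minFac Fact.out hm.ne']

theorem exists_mem_center_orderOf_eq (hG : IsPGroup p G) :
    ∃ z ∈ Subgroup.center G, orderOf z = p := by
  have := hG.center_nontrivial
  have hdvd : p ∣ Nat.card (Subgroup.center G) :=
    ((hG.to_subgroup _).card_eq_or_dvd).resolve_left Finite.one_lt_card.ne'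
  obtain ⟨z, hz⟩ := exists_prime_orderOf_dvd_card' p hdvd
  exact ⟨z, z.2, by rw [Subgroup.orderOf_coe, hz]⟩

theorem exists_monoidHom_ne_one (hG : IsPGroup p G) {H : Type*} [Group H] {z : H}
    (hz : orderOf z = p) : ∃ f : G →* H, f.range ≤ Subgroup.zpowers z ∧ f ≠ 1 := by
  obtain ⟨M, _, hM⟩ := hG.exists_normal_index_eq_prime
  let e : G ⧸ M ≃* Subgroup.zpowers z := mulEquivOfPrimeCardEq
    (by rw [← Subgroup.index_eq_card, hM]) (by rw [Nat.card_zpowers, hz])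
  refine ⟨(Subgroup.zpowers z).subtype.comp (e.toMonoidHom.comp (QuotientGroup.mk' M)),
    fun _ ⟨x, hx⟩ => hx ▸ (e _).2, fun h => ?_⟩
  obtain ⟨x, hx⟩ := SetLike.exists_not_mem_of_ne_top M
    fun hM_top => (Fact.out : p.Prime).ne_one (hM ▸ Subgroup.index_eq_one.mpr hM_top)
  have hex : e (QuotientGroup.mk' M x) = 1 := Subtype.ext (DFunLike.congr_fun h x)
  exact hx ((QuotientGroup.eq_one_iff x).mp (e.map_eq_one_iff.mp hex))

end Nontrivial

open MonoidHom in
theorem eq_one_or_surjective_of_idempotent (hG : IsPGroup p G) {ψ : G →* G}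
    (hψ : ∀ x, ψ (ψ x) = ψ x)
    (hcomm : ∀ α : MulAut G, α.toMonoidHom.comp ψ = ψ.comp α.toMonoidHom) :
    ψ = 1 ∨ Function.Surjective ψ := by
  by_contra! ⟨hψ1, hsurj⟩
  have hcomm_apply (α : MulAut G) (x : G) : α (ψ x) = ψ (α x) := DFunLike.congr_fun (hcomm α) x
  have hrange : ψ.range.Normal :=
    range_normal_of_map_conj fun g x => (hcomm_apply (MulAut.conj g) x).symm
  have : Nontrivial ψ.ker := by
    rwa [Subgroup.nontrivial_iff_ne_bot, Ne, ker_eq_bot_iff, Finite.injective_iff_surjective]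
  obtain ⟨z, hz_center_ker, hz⟩ := (hG.to_subgroup ψ.ker).exists_mem_center_orderOf_eq
  have hz_center : (z : G) ∈ Subgroup.center G := mem_center_of_mem_ker_of_commute hψ hrange z.2
    fun k hk => (congrArg Subtype.val (Subgroup.mem_center_iff.mp hz_center_ker ⟨k, hk⟩)).symm
  have : Nontrivial (G ⧸ ψ.ker) := QuotientGroup.nontrivial_iff.mpr (ker_eq_top_iff.not.mpr hψ1)
  obtain ⟨f₀, hf₀z, hf₀⟩ := (hG.to_quotient ψ.ker).exists_monoidHom_ne_one
    ((Subgroup.orderOf_coe z).trans hz)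
  set f := f₀.comp (QuotientGroup.mk' ψ.ker)
  have hfK : ψ.ker ≤ f.ker := fun x hx => by simp [f, (QuotientGroup.eq_one_iff x).mpr hx]
  have hfz (x : G) : f x ∈ Subgroup.zpowers (z : G) := hf₀z ⟨_, rfl⟩
  have hf_ker (x : G) : f x ∈ ψ.ker := Subgroup.zpowers_le.mpr z.2 (hfz x)
  have hcentral (x y : G) : Commute (f x) y :=
    (Subgroup.mem_center_iff.mp (Subgroup.zpowers_le.mpr hz_center (hfz x)) y).symm
  have hsq (x : G) : f (f x) = 1 := hfK (hf_ker x)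
  have hfψ : f.comp ψ = 1 := by
    ext x
    rw [comp_apply, one_apply]
    have := hcomm_apply (MulAut.ofCentral f hcentral hsq) x
    rwa [MulAut.ofCentral_apply, MulAut.ofCentral_apply, map_mul, mem_ker.mp (hf_ker x),
      mul_one, mul_eq_left] at this
  exact hf₀ <| cancel_right (QuotientGroup.mk'_surjective _) |>.mp <|
    (eq_one_of_comp_eq_one_of_ker_le hψ hfψ hfK).trans (one_comp _).symm

end IsPGroup

end

theorem stmt_14 (p : ℕ) (hp : p.Prime) (G : Type*) [Group G] [Finite G]
    (hpG : IsPGroup p G)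
    (hcomm : ∀ (α : MulAut G) (φ : G →* G),
      α.toMonoidHom.comp φ = φ.comp α.toMonoidHom) :
    ∀ φ : G →* G, Function.Bijective φ ∨
      ∃ n : ℕ, 0 < n ∧ ∀ g : G, (⇑φ)^[n] g = 1 := by
  intro φ
  have : Fact p.Prime := ⟨hp⟩
  have : Finite (Monoid.End G) := Finite.of_injective _ DFunLike.coe_injective
  let φE : Monoid.End G := φ
  obtain ⟨n, hn, hidem⟩ := exists_isIdempotentElem_pow φE
  let ψ : G →* G := φE ^ n
  have hψ (x : G) : ψ (ψ x) = ψ x := DFunLike.congr_fun hidem x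
  have hiter : ⇑ψ = (⇑φ)^[n] := Monoid.End.coe_pow (M := G) φE n
  rcases hpG.eq_one_or_surjective_of_idempotent hψ (hcomm · ψ) with h | h
  · exact .inr ⟨n, hn, fun g => by rw [← hiter, h]; rfl⟩
  · obtain ⟨k, rfl⟩ := Nat.exists_eq_succ_of_ne_zero hn.ne'
    rw [hiter, Function.iterate_succ'] at h
    exact .inl (Finite.surjective_iff_bijective.mp h.of_comp)
end
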